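/- arXiv:1507.03044 — 7 statements merged into one kernel-verified Lean document; each statement's English description precedes it below -/
import Mathlib

section
/- Let N_X be a K-order network over a finite nonempty set X having the symmetry and identity properties and satisfying the order increasing property. Then for any 0 ≤ k̃ ≤ k ≤ K, any tuple x_{0:k} ∈ X^{k+1}, and any indices l_0,…,l_{k̃} ∈ {0,…,k}, one has r_X^{k̃}(x_{l_0},…,x_{l_{k̃}}) ≤ r_X^k(x_{0:k}); that is, the relationship value of any sub-tuple is at most the relationship value of the full tuple. -/
/-! By the identity property, `r^k(x)` depends only on the set of nodes of `x`. Permute the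
indices of `x_{0:k}` so that the `j + 1` distinct indices used by `l` come first: the sub-tuple
then has the same node set as the prefix of length `j + 1` of the permuted tuple, and iterating the
order increasing property bounds the value of that prefix by the value of the permuted tuple,
which equals `r^k(x_{0:k})`. -/

/-- The relationship functions of a `K`-order network over node set `X`:
for each order `k`, a real-valued function on `(k+1)`-tuples of nodes
(only the functions of order `k ≤ K` are relevant). -/
abbrev RelFun (X : Type*) : Type _ := (k : ℕ) → (Fin (k + 1) → X) → ℝ

/-- The relationship functions of orders `0 ≤ k ≤ K` take values in `[0,1]`. -/
def RangeUnit {X : Type*} (K : ℕ) (r : RelFun X) : Prop :=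
  ∀ k, k ≤ K → ∀ x : Fin (k + 1) → X, r k x ∈ Set.Icc (0 : ℝ) 1

/-- Symmetry property: the relationship value is invariant under reorderings of the tuple. -/
def SymmetricNet {X : Type*} (K : ℕ) (r : RelFun X) : Prop :=
  ∀ k, k ≤ K → ∀ (x : Fin (k + 1) → X) (σ : Equiv.Perm (Fin (k + 1))),
    r k (x ∘ σ) = r k x

/-- Identity property: a sub-tuple with the same set of distinct elements as the
full tuple has the same relationship value. -/
def IdentityNet {X : Type*} (K : ℕ) (r : RelFun X) : Prop :=
  ∀ k k', k ≤ K → k' ≤ K → ∀ (x : Fin (k + 1) → X) (l : Fin (k' + 1) → Fin (k + 1)),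
    Set.range (x ∘ l) = Set.range x → r k' (x ∘ l) = r k x

/-- (Weak) order increasing property: `r^k(x_{0:k}) ≥ r^{k-1}(x_{0:k-1})`. -/
def OrderIncreasing {X : Type*} (K : ℕ) (r : RelFun X) : Prop :=
  ∀ k, k + 1 ≤ K → ∀ x : Fin (k + 2) → X,
    r k (fun i => x i.castSucc) ≤ r (k + 1) x

namespace OrderIncreasing

variable {X : Type*} {K : ℕ} {r : RelFun X}

theorem apply_comp_castLE_le (hInc : OrderIncreasing K r) {j k : ℕ} (hjk : j + 1 ≤ k + 1)
    (hk : k ≤ K) (y : Fin (k + 1) → X) : r j (y ∘ Fin.castLE hjk) ≤ r k y := by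
  induction k, (Nat.le_of_succ_le_succ hjk : j ≤ k) using Nat.le_induction with
  | base => rfl
  | succ k hjk' ih =>
    calc r j (y ∘ Fin.castLE hjk)
        = r j ((fun i => y i.castSucc) ∘ Fin.castLE (Nat.succ_le_succ hjk')) := rfl
      _ ≤ r k (fun i => y i.castSucc) := ih _ (by omega) _
      _ ≤ r (k + 1) y := hInc k hk y

end OrderIncreasing

namespace IdentityNet

variable {X : Type*} {K : ℕ} {r : RelFun X}

theorem apply_eq_of_range_eq (hId : IdentityNet K r) {a b : ℕ} (ha : a ≤ K) (hb : b ≤ K)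
    {y : Fin (a + 1) → X} {z : Fin (b + 1) → X} (h : Set.range y = Set.range z) :
    r a y = r b z := by
  obtain ⟨m, rfl⟩ := Set.range_subset_range_iff_exists_comp.1 h.subset
  exact hId b a hb ha z m h

end IdentityNet

theorem Fin.exists_perm_range_comp_castLE_eq {m n : ℕ} (l : Fin (m + 1) → Fin n) :
    ∃ j ≤ m, ∃ (hjn : j + 1 ≤ n) (σ : Equiv.Perm (Fin n)),
      Set.range (σ ∘ Fin.castLE hjn) = Set.range l := by
  classical
  set s := Finset.univ.image l
  obtain ⟨j, hj⟩ : ∃ j, s.card = j + 1 :=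
    Nat.exists_eq_succ_of_ne_zero (Finset.card_ne_zero.2 (Finset.univ_nonempty.image l))
  have hjm : j + 1 ≤ m + 1 := hj ▸ (Finset.card_image_le.trans_eq (Finset.card_fin _))
  have hjn : j + 1 ≤ n := hj ▸ (Finset.card_le_univ s).trans_eq (Fintype.card_fin n)
  obtain ⟨σ, hσ⟩ := Equiv.Perm.exists_extending_pair (Fin.castLE hjn) (s.orderEmbOfFin hj)
    (Fin.castLE_injective hjn) (s.orderEmbOfFin hj).injective
  refine ⟨j, by omega, hjn, σ, ?_⟩
  rw [show σ ∘ Fin.castLE hjn = s.orderEmbOfFin hj from funext hσ, Finset.range_orderEmbOfFin,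
    Finset.coe_image, Finset.coe_univ, Set.image_univ]

theorem subtuple_le_general {X : Type*} (K : ℕ) (r : RelFun X)
    (hId : IdentityNet K r) (hInc : OrderIncreasing K r) :
    ∀ (k' k : ℕ), k' ≤ k → k ≤ K → ∀ (x : Fin (k + 1) → X) (l : Fin (k' + 1) → Fin (k + 1)),
      r k' (x ∘ l) ≤ r k x := by
  intro k' k hk'k hkK x l
  obtain ⟨j, hjk', hjk, σ, hσ⟩ := Fin.exists_perm_range_comp_castLE_eq l
  calc r k' (x ∘ l) = r j ((x ∘ σ) ∘ Fin.castLE hjk) :=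
        hId.apply_eq_of_range_eq (by omega) (by omega) <| by
          rw [Function.comp_assoc, Set.range_comp, Set.range_comp, hσ]
    _ ≤ r k (x ∘ σ) := hInc.apply_comp_castLE_le hjk hkK _
    _ = r k x := hId.apply_eq_of_range_eq hkK hkK (σ.surjective.range_comp x)

/-- For a `K`-order network with the symmetry, identity, and order increasing
properties, the relationship value of any sub-tuple `x_{l_0}, …, x_{l_{k̃}}` of a tuple
`x_{0:k}` is at most the relationship value of the full tuple. -/
theorem subtuple_le {X : Type*} [Fintype X] [Nonempty X] (K : ℕ) (r : RelFun X)
    (hRange : RangeUnit K r) (hSym : SymmetricNet K r) (hId : IdentityNet K r)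
    (hInc : OrderIncreasing K r) :
    ∀ (k' k : ℕ), k' ≤ k → k ≤ K → ∀ (x : Fin (k + 1) → X) (l : Fin (k' + 1) → Fin (k + 1)),
      r k' (x ∘ l) ≤ r k x :=
  subtuple_le_general K r hId hInc
end

section
/- Let D_X be a dissimilarity network of order K over a finite nonempty set X. If 1 ≤ k ≤ K and the tuple x_{0:k} ∈ X^{k+1} has pairwise distinct elements, then for every 0 ≤ l ≤ k the face obtained by deleting x_l satisfies r_X^{k−1}(x_0,…,x_{l−1},x_{l+1},…,x_k) < r_X^k(x_{0:k}); that is, a simplex on distinct nodes appears strictly after each of its proper faces in the induced filtration. -/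
/-- Strict order increasing property: `r^k(x_{0:k}) ≥ r^{k-1}(x_{0:k-1})`, with equality
iff every element of the tuple `x_{0:k}` appears among `x_0, …, x_{k-1}`. -/
def StrictOrderIncreasing {X : Type*} (K : ℕ) (r : RelFun X) : Prop :=
  ∀ k, k + 1 ≤ K → ∀ x : Fin (k + 2) → X,
    r k (fun i => x i.castSucc) ≤ r (k + 1) x ∧
      (r k (fun i => x i.castSucc) = r (k + 1) x ↔
        Set.range x ⊆ Set.range fun i : Fin (k + 1) => x i.castSucc)

/-- A dissimilarity network of order `K`. -/
def IsDissimilarityNet {X : Type*} (K : ℕ) (r : RelFun X) : Prop :=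
  RangeUnit K r ∧ SymmetricNet K r ∧ IdentityNet K r ∧ StrictOrderIncreasing K r

/-- In a dissimilarity network, a simplex on pairwise distinct nodes appears strictly
after each of its proper faces: deleting any entry `x_l` from an injective tuple
strictly decreases the relationship value. -/
theorem face_lt {X : Type*} [Fintype X] [Nonempty X] (K : ℕ) (r : RelFun X)
    (hD : IsDissimilarityNet K r) :
    ∀ k : ℕ, k + 1 ≤ K → ∀ x : Fin (k + 2) → X, Function.Injective x →
      ∀ l : Fin (k + 2), r k (x ∘ l.succAbove) < r (k + 1) x := by
  intro k hk x hx l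
  obtain ⟨-, hSym, -, hStrict⟩ := hD
  -- permutation sending castSucc i ↦ succAbove l i, last ↦ l
  set f : Fin (k + 2) → Fin (k + 2) := Fin.lastCases l l.succAbove with hf
  have hfi : Function.Injective f := by
    intro a b hab
    induction a using Fin.lastCases with
    | last =>
      induction b using Fin.lastCases with
      | last => rfl
      | cast b =>
        simp only [hf, Fin.lastCases_last, Fin.lastCases_castSucc] at hab
        exact absurd hab.symm (Fin.succAbove_ne l b)
    | cast a =>
      induction b using Fin.lastCases with
      | last =>
        simp only [hf, Fin.lastCases_last, Fin.lastCases_castSucc] at hab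
        exact absurd hab (Fin.succAbove_ne l a)
      | cast b =>
        simp only [hf, Fin.lastCases_castSucc] at hab
        exact congrArg Fin.castSucc (l.succAbove_right_injective hab)
  let σ : Equiv.Perm (Fin (k + 2)) := Equiv.ofBijective f hfi.bijective_of_finite
  have hσ : ∀ i, σ i = f i := fun i => rfl
  have hcomp : (x ∘ l.succAbove) = fun i : Fin (k + 1) => (x ∘ σ) i.castSucc := by
    funext i
    simp [hσ, hf, Fin.lastCases_castSucc]
  have hsym : r (k + 1) (x ∘ σ) = r (k + 1) x := hSym (k + 1) hk x σ
  have hs := hStrict k hk (x ∘ σ)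
  rw [← hcomp] at hs
  rcases lt_or_eq_of_le hs.1 with h | h
  · rw [← hsym]; exact h
  · exfalso
    have hsub := hs.2.mp h
    have : (x ∘ σ) (Fin.last (k + 1)) ∈ Set.range (x ∘ l.succAbove) := by
      exact hsub ⟨Fin.last (k + 1), rfl⟩
    obtain ⟨i, hi⟩ := this
    have hlast : (x ∘ σ) (Fin.last (k + 1)) = x l := by
      simp [hσ, hf, Fin.lastCases_last]
    rw [hlast] at hi
    exact Fin.succAbove_ne l i (hx hi)
end

section
/- Let N_X and N_Y be K-order networks over finite nonempty sets X and Y, both having the symmetry and identity properties. Then for any 0 ≤ k' ≤ k ≤ K, the k'-order network distance is at most the k-order network distance: d^{k'}(N_X, N_Y) ≤ d^k(N_X, N_Y). -/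
/-- A correspondence between `X` and `Y`: a set of pairs covering all of `X` and all of `Y`. -/
def IsCorrespondence {X Y : Type*} (C : Finset (X × Y)) : Prop :=
  (∀ x : X, ∃ y : Y, (x, y) ∈ C) ∧ (∀ y : Y, ∃ x : X, (x, y) ∈ C)

/-- The `k`-order network difference with respect to a correspondence `C`:
the maximum of `|r_X^k(x_{0:k}) - r_Y^k(y_{0:k})|` over all choices of pairs
`(x_0,y_0), …, (x_k,y_k) ∈ C`. -/
noncomputable def Gamma {X Y : Type*} (rX : RelFun X) (rY : RelFun Y)
    (C : Finset (X × Y)) (k : ℕ) : ℝ :=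
  sSup {d : ℝ | ∃ (x : Fin (k + 1) → X) (y : Fin (k + 1) → Y),
    (∀ i, (x i, y i) ∈ C) ∧ d = |rX k x - rY k y|}

/-- The `k`-order network distance: the minimum of `Γ^k(C)` over all correspondences. -/
noncomputable def netDist {X Y : Type*} (rX : RelFun X) (rY : RelFun Y) (k : ℕ) : ℝ :=
  sInf {d : ℝ | ∃ C : Finset (X × Y), IsCorrespondence C ∧ d = Gamma rX rY C k}


section Aux

variable {X Y : Type*}

lemma gammaSet_nonempty {rX : RelFun X} {rY : RelFun Y} {C : Finset (X × Y)}
    (hC : C.Nonempty) (k : ℕ) :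
    {d : ℝ | ∃ (x : Fin (k + 1) → X) (y : Fin (k + 1) → Y),
      (∀ i, (x i, y i) ∈ C) ∧ d = |rX k x - rY k y|}.Nonempty := by
  obtain ⟨⟨a, b⟩, hab⟩ := hC
  exact ⟨_, fun _ => a, fun _ => b, fun _ => hab, rfl⟩

lemma gammaSet_bddAbove {K : ℕ} {rX : RelFun X} {rY : RelFun Y}
    (hRX : RangeUnit K rX) (hRY : RangeUnit K rY) {k : ℕ} (hk : k ≤ K)
    (C : Finset (X × Y)) :
    BddAbove {d : ℝ | ∃ (x : Fin (k + 1) → X) (y : Fin (k + 1) → Y),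
      (∀ i, (x i, y i) ∈ C) ∧ d = |rX k x - rY k y|} := by
  refine ⟨1, fun d hd => ?_⟩
  obtain ⟨x, y, _, rfl⟩ := hd
  have h1 := hRX k hk x
  have h2 := hRY k hk y
  rw [Set.mem_Icc] at h1 h2
  rw [abs_le]; constructor <;> linarith

lemma gamma_nonneg {K : ℕ} {rX : RelFun X} {rY : RelFun Y}
    (hRX : RangeUnit K rX) (hRY : RangeUnit K rY) {k : ℕ} (hk : k ≤ K)
    {C : Finset (X × Y)} (hC : C.Nonempty) :
    0 ≤ Gamma rX rY C k := by
  obtain ⟨d, hd⟩ := gammaSet_nonempty (rX := rX) (rY := rY) hC k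
  have hd0 : 0 ≤ d := by obtain ⟨x, y, _, rfl⟩ := hd; exact abs_nonneg _
  exact hd0.trans (le_csSup (gammaSet_bddAbove hRX hRY hk C) hd)

lemma corr_nonempty [Nonempty X] {C : Finset (X × Y)} (hC : IsCorrespondence C) :
    C.Nonempty := by
  obtain ⟨y, hy⟩ := hC.1 (Classical.arbitrary X)
  exact ⟨_, hy⟩

lemma gamma_mono {K : ℕ} {rX : RelFun X} {rY : RelFun Y}
    (hRX : RangeUnit K rX) (hIX : IdentityNet K rX)
    (hRY : RangeUnit K rY) (hIY : IdentityNet K rY)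
    {k' k : ℕ} (hkk : k' ≤ k) (hk : k ≤ K)
    {C : Finset (X × Y)} (hC : C.Nonempty) :
    Gamma rX rY C k' ≤ Gamma rX rY C k := by
  apply csSup_le_csSup (gammaSet_bddAbove hRX hRY hk C)
    (gammaSet_nonempty hC k')
  rintro d ⟨x, y, hxy, rfl⟩
  -- project Fin (k+1) onto Fin (k'+1)
  set p : Fin (k + 1) → Fin (k' + 1) := fun i => ⟨min i.val k', by omega⟩ with hp
  set l : Fin (k' + 1) → Fin (k + 1) := Fin.castLE (by omega) with hl
  have hpl : p ∘ l = id := by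
    funext j
    simp only [p, l, Function.comp, Fin.castLE]
    exact Fin.ext (by simp [Nat.min_eq_left (Nat.le_of_lt_succ j.isLt)])
  have hrangeX : Set.range ((x ∘ p) ∘ l) = Set.range (x ∘ p) := by
    rw [Function.comp_assoc, hpl, Function.comp_id]
    refine (Set.Subset.antisymm (Set.range_comp_subset_range p x) ?_).symm
    rintro _ ⟨i, rfl⟩
    refine ⟨l i, ?_⟩
    rw [Function.comp_apply, ← Function.comp_apply (f := p), hpl, id_eq]
  have hrangeY : Set.range ((y ∘ p) ∘ l) = Set.range (y ∘ p) := by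
    rw [Function.comp_assoc, hpl, Function.comp_id]
    refine (Set.Subset.antisymm (Set.range_comp_subset_range p y) ?_).symm
    rintro _ ⟨i, rfl⟩
    refine ⟨l i, ?_⟩
    rw [Function.comp_apply, ← Function.comp_apply (f := p), hpl, id_eq]
  have hxid : rX k' x = rX k (x ∘ p) := by
    have := hIX k k' hk (hkk.trans hk) (x ∘ p) l hrangeX
    rw [← this, Function.comp_assoc, hpl, Function.comp_id]
  have hyid : rY k' y = rY k (y ∘ p) := by
    have := hIY k k' hk (hkk.trans hk) (y ∘ p) l hrangeY
    rw [← this, Function.comp_assoc, hpl, Function.comp_id]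
  exact ⟨x ∘ p, y ∘ p, fun i => hxy (p i), by rw [hxid, hyid]⟩

end Aux

/-- The `k'`-order network distance is at most the `k`-order network distance
for `k' ≤ k ≤ K`, for networks with the symmetry and identity properties. -/
theorem netDist_mono {X Y : Type*} [Fintype X] [Nonempty X] [Fintype Y] [Nonempty Y]
    (K : ℕ) (rX : RelFun X) (rY : RelFun Y)
    (hRX : RangeUnit K rX) (hSX : SymmetricNet K rX) (hIX : IdentityNet K rX)
    (hRY : RangeUnit K rY) (hSY : SymmetricNet K rY) (hIY : IdentityNet K rY) :
    ∀ k' k : ℕ, k' ≤ k → k ≤ K → netDist rX rY k' ≤ netDist rX rY k := by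
  intro k' k hkk hk
  have hUniv : IsCorrespondence (Finset.univ : Finset (X × Y)) :=
    ⟨fun x => ⟨Classical.arbitrary Y, Finset.mem_univ _⟩,
     fun y => ⟨Classical.arbitrary X, Finset.mem_univ _⟩⟩
  have hbdd : BddBelow {d : ℝ | ∃ C : Finset (X × Y),
      IsCorrespondence C ∧ d = Gamma rX rY C k'} := by
    refine ⟨0, fun d hd => ?_⟩
    obtain ⟨C, hC, rfl⟩ := hd
    exact gamma_nonneg hRX hRY (hkk.trans hk) (corr_nonempty hC)
  refine le_csInf ⟨_, Finset.univ, hUniv, rfl⟩ ?_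
  rintro d ⟨C, hC, rfl⟩
  calc netDist rX rY k' ≤ Gamma rX rY C k' := csInf_le hbdd ⟨C, hC, rfl⟩
    _ ≤ Gamma rX rY C k := gamma_mono hRX hIX hRY hIY hkk hk (corr_nonempty hC)
end

section
/- Let N_X and N_Y be K-order networks over finite nonempty sets X and Y, both having the symmetry and identity properties. Then the ∞-norm network distance equals the K-order network distance: d_∞(N_X, N_Y) = d^K(N_X, N_Y). -/
/-- The `∞`-norm network distance: the minimum over correspondences of
`max_{0 ≤ k ≤ K} Γ^k(C)`. -/
noncomputable def netDistInf {X Y : Type*} (K : ℕ) (rX : RelFun X) (rY : RelFun Y) : ℝ :=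
  sInf {d : ℝ | ∃ C : Finset (X × Y), IsCorrespondence C ∧
    d = ⨆ k : Fin (K + 1), Gamma rX rY C (k : ℕ)}

/-- For networks with the symmetry and identity properties, the `∞`-norm network
distance equals the `K`-order network distance. -/
theorem netDistInf_eq_netDist_top {X Y : Type*} [Fintype X] [Nonempty X]
    [Fintype Y] [Nonempty Y] (K : ℕ) (rX : RelFun X) (rY : RelFun Y)
    (hRX : RangeUnit K rX) (hSX : SymmetricNet K rX) (hIX : IdentityNet K rX)
    (hRY : RangeUnit K rY) (hSY : SymmetricNet K rY) (hIY : IdentityNet K rY) :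
    netDistInf K rX rY = netDist rX rY K := by
  have key : ∀ C : Finset (X × Y), IsCorrespondence C →
      (⨆ k : Fin (K + 1), Gamma rX rY C (k : ℕ)) = Gamma rX rY C K := by
    intro C hC
    obtain ⟨x0⟩ := (inferInstance : Nonempty X)
    obtain ⟨y0, hy0⟩ := hC.1 x0
    have hne : ∀ k : ℕ, Set.Nonempty {d : ℝ | ∃ (x : Fin (k + 1) → X) (y : Fin (k + 1) → Y),
        (∀ i, (x i, y i) ∈ C) ∧ d = |rX k x - rY k y|} :=
      fun k => ⟨_, fun _ => x0, fun _ => y0, fun _ => hy0, rfl⟩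
    have hbdd : ∀ k : ℕ, k ≤ K → ∀ d ∈ {d : ℝ | ∃ (x : Fin (k + 1) → X) (y : Fin (k + 1) → Y),
        (∀ i, (x i, y i) ∈ C) ∧ d = |rX k x - rY k y|}, d ≤ 1 := by
      intro k hk d hd
      obtain ⟨x, y, hxy, rfl⟩ := hd
      have hx := hRX k hk x
      have hy := hRY k hk y
      rw [abs_le]
      exact ⟨by linarith [hx.1, hx.2, hy.1, hy.2], by linarith [hx.1, hx.2, hy.1, hy.2]⟩
    have hbK : BddAbove {d : ℝ | ∃ (x : Fin (K + 1) → X) (y : Fin (K + 1) → Y),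
        (∀ i, (x i, y i) ∈ C) ∧ d = |rX K x - rY K y|} := ⟨1, fun d hd => hbdd K le_rfl d hd⟩
    have h0 : (0 : ℝ) ≤ Gamma rX rY C K := by
      refine (abs_nonneg (rX K (fun _ => x0) - rY K (fun _ => y0))).trans ?_
      exact le_csSup hbK ⟨fun _ => x0, fun _ => y0, fun _ => hy0, rfl⟩
    have hle : ∀ k : ℕ, k ≤ K → Gamma rX rY C k ≤ Gamma rX rY C K := by
      intro k hk
      refine Real.sSup_le ?_ h0
      rintro d ⟨x, y, hxy, rfl⟩
      set x' : Fin (K + 1) → X := fun i => x ⟨min i.val k, Nat.lt_succ_of_le (min_le_right _ _)⟩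
        with hx'
      set y' : Fin (K + 1) → Y := fun i => y ⟨min i.val k, Nat.lt_succ_of_le (min_le_right _ _)⟩
        with hy'
      set l : Fin (k + 1) → Fin (K + 1) := Fin.castLE (by omega) with hl
      have hxl : x' ∘ l = x := by
        funext i
        simp only [hx', hl, Function.comp_apply, Fin.castLE]
        congr 1
        exact Fin.ext (Nat.min_eq_left (Nat.le_of_lt_succ i.isLt))
      have hyl : y' ∘ l = y := by
        funext i
        simp only [hy', hl, Function.comp_apply, Fin.castLE]
        congr 1
        exact Fin.ext (Nat.min_eq_left (Nat.le_of_lt_succ i.isLt))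
      have hrx : Set.range (x' ∘ l) = Set.range x' := by
        apply Set.Subset.antisymm (Set.range_comp_subset_range _ _)
        rintro _ ⟨i, rfl⟩
        refine ⟨⟨min i.val k, Nat.lt_succ_of_le (min_le_right _ _)⟩, ?_⟩
        rw [hxl]
      have hry : Set.range (y' ∘ l) = Set.range y' := by
        apply Set.Subset.antisymm (Set.range_comp_subset_range _ _)
        rintro _ ⟨i, rfl⟩
        refine ⟨⟨min i.val k, Nat.lt_succ_of_le (min_le_right _ _)⟩, ?_⟩
        rw [hyl]
      have hXeq : rX k x = rX K x' := by
        rw [← hxl]; exact hIX K k le_rfl hk x' l hrx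
      have hYeq : rY k y = rY K y' := by
        rw [← hyl]; exact hIY K k le_rfl hk y' l hry
      rw [hXeq, hYeq]
      refine le_csSup hbK ⟨x', y', fun i => ?_, rfl⟩
      have := hxy ⟨min i.val k, Nat.lt_succ_of_le (min_le_right _ _)⟩
      simpa [hx', hy'] using this
    apply le_antisymm
    · exact ciSup_le fun k => hle k (Nat.le_of_lt_succ k.isLt)
    · have := le_ciSup (f := fun k : Fin (K + 1) => Gamma rX rY C (k : ℕ))
        (Set.Finite.bddAbove (Set.finite_range _)) (Fin.last K)
      simpa using this
  unfold netDistInf netDist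
  congr 1
  ext d
  simp only [Set.mem_setOf_eq]
  constructor
  · rintro ⟨C, hC, rfl⟩; exact ⟨C, hC, key C hC⟩
  · rintro ⟨C, hC, rfl⟩; exact ⟨C, hC, (key C hC).symm⟩
end

section
/- Let N_X and N_Y be K-order networks over finite nonempty sets X and Y, both having the symmetry and identity properties. Then for every correspondence C between X and Y and any 0 ≤ k' ≤ k ≤ K, the network differences measured by C are monotone in the order: Γ^{k'}_{X,Y}(C) ≤ Γ^k_{X,Y}(C). Consequently max_{0≤k≤K} Γ^k_{X,Y}(C) = Γ^K_{X,Y}(C). -/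

private lemma relfun_extend {Z : Type*} {K k k' : ℕ} (hkk : k' ≤ k) (hk : k ≤ K)
    (r : RelFun Z) (hI : IdentityNet K r) (z : Fin (k' + 1) → Z) :
    r k' z = r k (fun i => z ⟨min (i : ℕ) k', by omega⟩) := by
  have := hI k k' hk (le_trans hkk hk)
    (fun i => z ⟨min (i : ℕ) k', by omega⟩) (Fin.castLE (by omega)) ?_
  · rw [← this]
    congr 1
    funext i
    simp only [Function.comp_apply, Fin.castLE]
    congr 1
    exact Fin.ext (by simp [Nat.min_eq_left (Nat.lt_succ_iff.mp i.isLt)])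
  · apply le_antisymm (Set.range_comp_subset_range _ _)
    rintro w ⟨i, rfl⟩
    exact ⟨⟨min (i : ℕ) k', by omega⟩, by
      simp only [Function.comp_apply, Fin.castLE]
      congr 1
      exact Fin.ext (by simp [Nat.min_le_right])⟩

/-- For networks with the symmetry and identity properties, the network differences
measured by any fixed correspondence `C` are monotone in the order:
`Γ^{k'}(C) ≤ Γ^k(C)` for `k' ≤ k ≤ K`; consequently `max_{0 ≤ k ≤ K} Γ^k(C) = Γ^K(C)`. -/
theorem Gamma_mono {X Y : Type*} [Fintype X] [Nonempty X] [Fintype Y] [Nonempty Y]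
    (K : ℕ) (rX : RelFun X) (rY : RelFun Y)
    (hRX : RangeUnit K rX) (hSX : SymmetricNet K rX) (hIX : IdentityNet K rX)
    (hRY : RangeUnit K rY) (hSY : SymmetricNet K rY) (hIY : IdentityNet K rY) :
    ∀ C : Finset (X × Y), IsCorrespondence C →
      (∀ k' k : ℕ, k' ≤ k → k ≤ K → Gamma rX rY C k' ≤ Gamma rX rY C k) ∧
      (⨆ k : Fin (K + 1), Gamma rX rY C (k : ℕ)) = Gamma rX rY C K := by
  intro C hC
  -- the set defining Gamma at order k
  set S : ℕ → Set ℝ := fun k => {d : ℝ | ∃ (x : Fin (k + 1) → X) (y : Fin (k + 1) → Y),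
    (∀ i, (x i, y i) ∈ C) ∧ d = |rX k x - rY k y|} with hS
  have hne : ∀ k, (S k).Nonempty := by
    intro k
    obtain ⟨x0⟩ := (inferInstance : Nonempty X)
    obtain ⟨y0, hy0⟩ := hC.1 x0
    exact ⟨_, fun _ => x0, fun _ => y0, fun _ => hy0, rfl⟩
  have hbdd : ∀ k, k ≤ K → ∀ d ∈ S k, d ≤ 1 := by
    rintro k hk d ⟨x, y, -, rfl⟩
    have hx := hRX k hk x
    have hy := hRY k hk y
    rw [abs_sub_le_iff]
    constructor <;> [skip; skip] <;>
      · obtain ⟨h1, h2⟩ := hx; obtain ⟨h3, h4⟩ := hy; linarith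
  have hBdd : ∀ k, k ≤ K → BddAbove (S k) := fun k hk => ⟨1, fun d hd => hbdd k hk d hd⟩
  have hmono : ∀ k' k : ℕ, k' ≤ k → k ≤ K → Gamma rX rY C k' ≤ Gamma rX rY C k := by
    intro k' k hkk hk
    have hsub : S k' ⊆ S k := by
      rintro d ⟨x, y, hxy, rfl⟩
      refine ⟨fun i => x ⟨min i k', by omega⟩, fun i => y ⟨min i k', by omega⟩,
        fun i => hxy _, ?_⟩
      have h1 := relfun_extend hkk hk rX hIX x
      have h2 := relfun_extend hkk hk rY hIY y
      rw [h1, h2]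
    exact csSup_le_csSup (hBdd k hk) (hne k') hsub
  refine ⟨hmono, le_antisymm ?_ ?_⟩
  · exact ciSup_le fun i => hmono i K (Nat.lt_succ_iff.mp i.isLt) le_rfl
  · exact le_ciSup (f := fun k : Fin (K + 1) => Gamma rX rY C (k : ℕ))
      (Set.Finite.bddAbove (Set.finite_range _)) ⟨K, Nat.lt_succ_self K⟩
end

section
/- Let D_X and D_Y be dissimilarity networks of order K over finite nonempty sets X and Y, let δ ≥ 0, and let C be a correspondence between X and Y such that for every 0 ≤ k ≤ K and every choice of pairs (x_0,y_0),…,(x_k,y_k) ∈ C one has |r_X^k(x_{0:k}) − r_Y^k(y_{0:k})| ≤ δ. Let A_X and A_Y be the augmented networks on node set C. Then their sublevel complexes are δ-interleaved: for every α ∈ ℝ, every simplex (nonempty node subset) in the sublevel complex of A_X at level α belongs to the sublevel complex of A_Y at level α + δ, and vice versa. -/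
/-- The sublevel complex `L_α`: the nonempty subsets `S ⊆ X` with `|S| ≤ K + 1`
whose weight (the relationship value of any tuple enumerating `S`) is at most `α`. -/
def sublevel {X : Type*} (K : ℕ) (r : RelFun X) (α : ℝ) : Set (Finset X) :=
  {S | S.Nonempty ∧ S.card ≤ K + 1 ∧
    ∀ (k : ℕ) (x : Fin (k + 1) → X), S.card = k + 1 → Set.range x = ↑S → r k x ≤ α}

/-- The augmented network `A_X` on the node set `C`: the relationship value of a tuple
of nodes of `C` is the relationship value in `D_X` of the tuple of first components. -/
def augmentedX {X Y : Type*} (rX : RelFun X) (C : Finset (X × Y)) :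
    RelFun {p : X × Y // p ∈ C} :=
  fun k a => rX k fun i => (a i : X × Y).1

/-- The augmented network `A_Y` on the node set `C`: the relationship value of a tuple
of nodes of `C` is the relationship value in `D_Y` of the tuple of second components. -/
def augmentedY {X Y : Type*} (rY : RelFun Y) (C : Finset (X × Y)) :
    RelFun {p : X × Y // p ∈ C} :=
  fun k a => rY k fun i => (a i : X × Y).2

/-- If a correspondence `C` matches all relationship values of two dissimilarity
networks within `δ`, then the sublevel complexes of the two augmented networks on `C`
are `δ`-interleaved. -/
theorem augmented_interleaved {X Y : Type*} [Fintype X] [Nonempty X] [Fintype Y] [Nonempty Y]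
    (K : ℕ) (rX : RelFun X) (rY : RelFun Y)
    (hDX : IsDissimilarityNet K rX) (hDY : IsDissimilarityNet K rY)
    (δ : ℝ) (hδ : 0 ≤ δ) (C : Finset (X × Y)) (hC : IsCorrespondence C)
    (hclose : ∀ k, k ≤ K → ∀ (x : Fin (k + 1) → X) (y : Fin (k + 1) → Y),
      (∀ i, (x i, y i) ∈ C) → |rX k x - rY k y| ≤ δ) :
    ∀ α : ℝ, ∀ S : Finset {p : X × Y // p ∈ C},
      (S ∈ sublevel K (augmentedX rX C) α → S ∈ sublevel K (augmentedY rY C) (α + δ)) ∧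
      (S ∈ sublevel K (augmentedY rY C) α → S ∈ sublevel K (augmentedX rX C) (α + δ)) := by
  intro α S
  constructor
  · rintro ⟨hne, hcard, h⟩
    refine ⟨hne, hcard, ?_⟩
    intro k a hk hr
    have hkK : k ≤ K := by omega
    have hclose' := hclose k hkK (fun i => (a i : X × Y).1) (fun i => (a i : X × Y).2)
      (fun i => (a i).2)
    have hX := h k a hk hr
    have habs := abs_le.mp hclose'
    simp only [augmentedX, augmentedY] at *
    linarith [habs.1, habs.2]
  · rintro ⟨hne, hcard, h⟩
    refine ⟨hne, hcard, ?_⟩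
    intro k a hk hr
    have hkK : k ≤ K := by omega
    have hclose' := hclose k hkK (fun i => (a i : X × Y).1) (fun i => (a i : X × Y).2)
      (fun i => (a i).2)
    have hY := h k a hk hr
    have habs := abs_le.mp hclose'
    simp only [augmentedX, augmentedY] at *
    linarith [habs.1, habs.2]
end

section
/- Let N_X and N_Y be K-order networks over finite nonempty sets X and Y. Then the 0-order network distance equals the two-sided nearest-neighbor (Hausdorff-type) quantity on the zeroth order relationships: d^0(N_X, N_Y) = max( max_{x ∈ X} min_{y ∈ Y} |r_X^0(x) − r_Y^0(y)|, max_{y ∈ Y} min_{x ∈ X} |r_X^0(x) − r_Y^0(y)| ); in particular an optimal correspondence is obtained by matching each node to a node of the other network with closest zeroth order relationship. -/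
/-- Auxiliary: the defining set of `Gamma` at order `0` is the image of `C`
under the pointwise absolute difference. -/
lemma gammaSet_zero_eq {X Y : Type*} (rX : RelFun X) (rY : RelFun Y)
    (C : Finset (X × Y)) :
    {d : ℝ | ∃ (x : Fin 1 → X) (y : Fin 1 → Y),
      (∀ i, (x i, y i) ∈ C) ∧ d = |rX 0 x - rY 0 y|} =
    (fun p : X × Y => |rX 0 (fun _ => p.1) - rY 0 (fun _ => p.2)|) '' ↑C := by
  ext d
  constructor
  · rintro ⟨x, y, hm, rfl⟩
    refine ⟨(x 0, y 0), hm 0, ?_⟩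
    have hx : (fun _ : Fin 1 => x 0) = x := funext fun i => by fin_cases i; rfl
    have hy : (fun _ : Fin 1 => y 0) = y := funext fun i => by fin_cases i; rfl
    simp only [hx, hy]
  · rintro ⟨p, hp, rfl⟩
    exact ⟨fun _ => p.1, fun _ => p.2, fun _ => hp, rfl⟩

/-- The `0`-order network distance equals the two-sided nearest-neighbor
(Hausdorff-type) quantity on the zeroth order relationships: each node is optimally
matched to a node of the other network with closest zeroth order relationship value. -/
theorem netDist_zero_eq {X Y : Type*} [Fintype X] [Nonempty X] [Fintype Y] [Nonempty Y]
    (K : ℕ) (rX : RelFun X) (rY : RelFun Y)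
    (hRX : RangeUnit K rX) (hRY : RangeUnit K rY) :
    netDist rX rY 0 =
      max (⨆ x : X, ⨅ y : Y, |rX 0 (fun _ => x) - rY 0 (fun _ => y)|)
        (⨆ y : Y, ⨅ x : X, |rX 0 (fun _ => x) - rY 0 (fun _ => y)|) := by

  classical
  set f : X → Y → ℝ := fun x y => |rX 0 (fun _ => x) - rY 0 (fun _ => y)| with hf
  set g : X × Y → ℝ := fun p => f p.1 p.2 with hg
  have hf01 : ∀ x y, f x y ∈ Set.Icc (0 : ℝ) 1 := by
    intro x y
    obtain ⟨ha0, ha1⟩ := hRX 0 (Nat.zero_le K) (fun _ => x)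
    obtain ⟨hb0, hb1⟩ := hRY 0 (Nat.zero_le K) (fun _ => y)
    exact ⟨abs_nonneg _, abs_sub_le_iff.mpr ⟨by linarith, by linarith⟩⟩
  -- Gamma at 0 as sSup of an image
  have hGamma : ∀ C : Finset (X × Y), Gamma rX rY C 0 = sSup (g '' ↑C) := by
    intro C
    unfold Gamma
    rw [gammaSet_zero_eq rX rY C]
  have hbddg : ∀ C : Finset (X × Y), BddAbove (g '' ↑C) :=
    fun C => (C.finite_toSet.image g).bddAbove
  -- bounds for the iSup/iInf
  have hbA : BddAbove (Set.range fun x : X => ⨅ y : Y, f x y) := (Set.finite_range _).bddAbove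
  have hbB : BddAbove (Set.range fun y : Y => ⨅ x : X, f x y) := (Set.finite_range _).bddAbove
  have hbAx : ∀ x : X, BddBelow (Set.range fun y : Y => f x y) := fun x => (Set.finite_range _).bddBelow
  have hbBy : ∀ y : Y, BddBelow (Set.range fun x : X => f x y) := fun y => (Set.finite_range _).bddBelow
  set M : ℝ := max (⨆ x : X, ⨅ y : Y, f x y) (⨆ y : Y, ⨅ x : X, f x y) with hM
  -- the universal correspondence
  have hUniv : IsCorrespondence (Finset.univ : Finset (X × Y)) := by
    constructor
    · intro x; exact ⟨Classical.arbitrary Y, Finset.mem_univ _⟩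
    · intro y; exact ⟨Classical.arbitrary X, Finset.mem_univ _⟩
  have hSne : {d : ℝ | ∃ C : Finset (X × Y), IsCorrespondence C ∧ d = Gamma rX rY C 0}.Nonempty :=
    ⟨_, Finset.univ, hUniv, rfl⟩
  -- every Γ over a correspondence is at least M
  have hlow : ∀ C : Finset (X × Y), IsCorrespondence C → M ≤ Gamma rX rY C 0 := by
    intro C hC
    rw [hGamma]
    refine max_le ?_ ?_
    · refine ciSup_le fun x => ?_
      obtain ⟨y, hy⟩ := hC.1 x
      refine le_trans (ciInf_le (hbAx x) y) (le_csSup (hbddg C) ?_)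
      exact ⟨(x, y), hy, rfl⟩
    · refine ciSup_le fun y => ?_
      obtain ⟨x, hx⟩ := hC.2 y
      refine le_trans (ciInf_le (hbBy y) x) (le_csSup (hbddg C) ?_)
      exact ⟨(x, y), hx, rfl⟩
  -- every Γ over a correspondence is nonneg, giving a lower bound for netDist's set
  have hbddS : BddBelow {d : ℝ | ∃ C : Finset (X × Y), IsCorrespondence C ∧ d = Gamma rX rY C 0} := by
    refine ⟨0, ?_⟩
    rintro d ⟨C, hC, rfl⟩
    set x0 := Classical.arbitrary X with hx0
    obtain ⟨y, hy⟩ := hC.1 x0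
    rw [hGamma]
    refine le_trans (hf01 x0 y).1 (le_csSup (hbddg C) ?_)
    exact ⟨(x0, y), hy, rfl⟩
  refine le_antisymm ?_ ?_
  · -- netDist ≤ M : use the nearest-neighbor correspondence
    obtain ⟨yx, hyx⟩ : ∃ yx : X → Y, ∀ x y, f x (yx x) ≤ f x y := by
      choose yx hyx using fun x => Finite.exists_min (f x)
      exact ⟨yx, hyx⟩
    obtain ⟨xy, hxy⟩ : ∃ xy : Y → X, ∀ y x, f (xy y) y ≤ f x y := by
      choose xy hxy using fun y => Finite.exists_min (fun x => f x y)
      exact ⟨xy, hxy⟩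
    set C : Finset (X × Y) :=
      (Finset.univ.image fun x => (x, yx x)) ∪ (Finset.univ.image fun y => (xy y, y)) with hCdef
    have hC : IsCorrespondence C := by
      constructor
      · intro x
        exact ⟨yx x, Finset.mem_union_left _ (Finset.mem_image.mpr ⟨x, Finset.mem_univ _, rfl⟩)⟩
      · intro y
        exact ⟨xy y, Finset.mem_union_right _ (Finset.mem_image.mpr ⟨y, Finset.mem_univ _, rfl⟩)⟩
    have hGC : Gamma rX rY C 0 ≤ M := by
      rw [hGamma]
      refine csSup_le ?_ ?_
      · obtain ⟨y, hy⟩ := hC.1 (Classical.arbitrary X)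
        exact ⟨_, ⟨(Classical.arbitrary X, y), hy, rfl⟩⟩
      · rintro d ⟨p, hp, rfl⟩
        rcases Finset.mem_union.mp hp with h | h
        · obtain ⟨x, _, rfl⟩ := Finset.mem_image.mp h
          refine le_trans ?_ (le_max_left _ _)
          exact le_trans (le_ciInf fun y => hyx x y) (le_ciSup hbA x)
        · obtain ⟨y, _, rfl⟩ := Finset.mem_image.mp h
          refine le_trans ?_ (le_max_right _ _)
          exact le_trans (le_ciInf fun x => hxy y x) (le_ciSup hbB y)
    exact le_trans (csInf_le hbddS ⟨C, hC, rfl⟩) hGC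
  · exact le_csInf hSne (by rintro d ⟨C, hC, rfl⟩; exact hlow C hC)
end
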